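/- Let Λ = [[λ₁,λ₂],[λ₂,λ₁]] be real with λ₁ ≥ λ₂ + 1 and λ₂ ≥ 0, and set ρ = (log²(λ₁+λ₂) + log²(λ₁−λ₂))^{1/2}. Then: (i) every continuously differentiable curve Z : [0,t₀] → Ĥ₂ with Z(0) = iI and Z(t₀) = iΛ has symplectic length ∫₀^{t₀} (tr(Y(t)^{-1} Z′(t) Y(t)^{-1} conj(Z′(t))))^{1/2} dt ≥ ρ, where Y(t) = Im Z(t); (ii) the curve Z(t) = i·[[( (λ₁+λ₂)^{t/t₀} + (λ₁−λ₂)^{t/t₀} )/2, ( (λ₁+λ₂)^{t/t₀} − (λ₁−λ₂)^{t/t₀} )/2],[( (λ₁+λ₂)^{t/t₀} − (λ₁−λ₂)^{t/t₀} )/2, ( (λ₁+λ₂)^{t/t₀} + (λ₁−λ₂)^{t/t₀} )/2]] joins iI to iΛ inside Ĥ₂ and has symplectic length exactly ρ. -/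

import Mathlib

open Matrix Complex

noncomputable section

abbrev Mat2 : Type := Matrix (Fin 2) (Fin 2) ℂ
abbrev Mat2R : Type := Matrix (Fin 2) (Fin 2) ℝ
abbrev Mat4 : Type := Matrix (Fin 2 ⊕ Fin 2) (Fin 2 ⊕ Fin 2) ℝ

/-- `q = [[0,1],[1,0]]`. -/
def qR : Mat2R := !![0, 1; 1, 0]

/-- `J = [[0, I₂],[−I₂, 0]]` (4×4). -/
def Jmat : Mat4 := Matrix.fromBlocks 0 1 (-1) 0

/-- `Q = diag(q, q)` (4×4). -/
def Qmat : Mat4 := Matrix.fromBlocks qR 0 0 qR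

/-- `Ω₂ = Sp(4,ℝ) = {M : ᵗM J M = J}`. -/
def Omega2 : Set Mat4 := {M | Mᵀ * Jmat * M = Jmat}

/-- The new Siegel upper half space `Ĥ₂`: bi-symmetric `Z = [[τ,z],[z,τ]]` with `Im τ > |Im z|`. -/
def Hhat : Set Mat2 :=
  {Z | Z 1 1 = Z 0 0 ∧ Z 1 0 = Z 0 1 ∧ |(Z 0 1).im| < (Z 0 0).im}

/-- The action `M<Z> = (AZ+B)(CZ+D)⁻¹` of a real 4×4 matrix in 2×2 blocks on `Z ∈ ℂ^{2×2}`. -/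
def act (M : Mat4) (Z : Mat2) : Mat2 :=
  (M.toBlocks₁₁.map Complex.ofReal * Z + M.toBlocks₁₂.map Complex.ofReal) *
    (M.toBlocks₂₁.map Complex.ofReal * Z + M.toBlocks₂₂.map Complex.ofReal)⁻¹

/-- `Ω̂₂ = {M ∈ Ω₂ : M<Z> ∈ Ĥ₂ for all Z ∈ Ĥ₂}`. -/
def OmegaHat : Set Mat4 := {M | M ∈ Omega2 ∧ ∀ Z ∈ Hhat, act M Z ∈ Hhat}

/-- Entrywise complex conjugation of a matrix. -/
def conjM (Z : Mat2) : Mat2 := Z.map (starRingEnd ℂ)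

/-- The imaginary part `Y = Im Z` of a complex matrix, as a real matrix. -/
def imPart (Z : Mat2) : Mat2R := Z.map Complex.im

/-- The symplectic quadratic form `tr(Y⁻¹ H Y⁻¹ conj H)` at the point `Z`
(with `Y = Im Z`), evaluated on the tangent `H`. -/
def metricForm (Z H : Mat2) : ℂ :=
  (((imPart Z)⁻¹).map Complex.ofReal * H * ((imPart Z)⁻¹).map Complex.ofReal *
    conjM H).trace

/-- The bi-symmetric matrix curve `t ↦ [[f t, g t],[g t, f t]]`. -/
def mk (f g : ℝ → ℂ) (t : ℝ) : Mat2 := !![f t, g t; g t, f t]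

/-- Diagonal entry of the candidate geodesic from `iI` to `iΛ`. -/
def geoT (l₁ l₂ t₀ t : ℝ) : ℂ :=
  Complex.I * Complex.ofReal (((l₁ + l₂) ^ (t / t₀) + (l₁ - l₂) ^ (t / t₀)) / 2)

/-- Off-diagonal entry of the candidate geodesic from `iI` to `iΛ`. -/
def geoZ (l₁ l₂ t₀ t : ℝ) : ℂ :=
  Complex.I * Complex.ofReal (((l₁ + l₂) ^ (t / t₀) - (l₁ - l₂) ^ (t / t₀)) / 2)

/-- Derivative of `geoT`. -/
def geoT' (l₁ l₂ t₀ t : ℝ) : ℂ :=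
  Complex.I * Complex.ofReal ((Real.log (l₁ + l₂) * (l₁ + l₂) ^ (t / t₀) +
    Real.log (l₁ - l₂) * (l₁ - l₂) ^ (t / t₀)) / (2 * t₀))

/-- Derivative of `geoZ`. -/
def geoZ' (l₁ l₂ t₀ t : ℝ) : ℂ :=
  Complex.I * Complex.ofReal ((Real.log (l₁ + l₂) * (l₁ + l₂) ^ (t / t₀) -
    Real.log (l₁ - l₂) * (l₁ - l₂) ^ (t / t₀)) / (2 * t₀))

/-!
With `u = τ + z` and `v = τ - z`, the symplectic metric at a bi-symmetric point `[[τ,z],[z,τ]]`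
is `|u'|² / (Im u)² + |v'|² / (Im v)²`, so `Ĥ₂` is isometric to a product of two Poincaré
half-planes. In each factor `|w'| / Im w ≥ |(log Im w)'|`, so a path has length at least the
change of `log Im w` between its endpoints, and Minkowski's inequality
`√((∫ A)² + (∫ B)²) ≤ ∫ √(A² + B²)` combines the two factors into the bound `ρ`. The extremal
curve runs up the imaginary axis in both factors, `u = i (λ₁+λ₂)^(t/t₀)`, `v = i (λ₁-λ₂)^(t/t₀)`,
at constant speed `ρ / t₀`.
-/

open Set MeasureTheory intervalIntegral

lemma inv_bisymm (b c : ℝ) :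
    (!![b, c; c, b] : Mat2R)⁻¹ = (b * b - c * c)⁻¹ • !![b, -c; -c, b] := by
  rw [Matrix.inv_def, det_fin_two_of, adjugate_fin_two_of, Ring.inverse_eq_inv']

lemma mk_mem_Hhat_iff (f g : ℝ → ℂ) (t : ℝ) :
    _root_.mk f g t ∈ Hhat ↔ 0 < (f t + g t).im ∧ 0 < (f t - g t).im := by
  simp only [_root_.mk, Hhat, Set.mem_ofPred_eq, of_apply, cons_val', cons_val_zero,
    cons_val_one, empty_val', cons_val_fin_one, true_and, abs_lt, add_im, sub_im]
  constructor <;> rintro ⟨h₁, h₂⟩ <;> constructor <;> linarith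

lemma metricForm_bisymm_re {τ z τ' z' : ℂ} (hp : (τ + z).im ≠ 0) (hm : (τ - z).im ≠ 0) :
    (metricForm !![τ, z; z, τ] !![τ', z'; z', τ']).re =
      ‖τ' + z'‖ ^ 2 / (τ + z).im ^ 2 + ‖τ' - z'‖ ^ 2 / (τ - z).im ^ 2 := by
  have himp : imPart !![τ, z; z, τ] = !![τ.im, z.im; z.im, τ.im] := by
    ext i j; fin_cases i <;> fin_cases j <;> rfl
  rw [add_im] at hp
  rw [sub_im] at hm
  rw [metricForm, himp, inv_bisymm,
    show τ.im * τ.im - z.im * z.im = (τ.im + z.im) * (τ.im - z.im) by ring]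
  simp only [_root_.mul_inv_rev, smul_of, smul_cons, smul_eq_mul, mul_neg, Matrix.smul_empty, conjM,
    trace_fin_two, Fin.isValue, Matrix.mul_apply, map_apply, of_apply, cons_val', cons_val_fin_one,
    cons_val_zero, Fin.sum_univ_two, ofReal_mul, ofReal_inv, ofReal_sub, ofReal_add, cons_val_one,
    ofReal_neg, neg_mul, add_re, mul_re, inv_re, sub_re, ofReal_re, normSq_apply, sub_im, ofReal_im,
    sub_self, mul_zero, add_zero, div_self_mul_self', add_im, inv_im, neg_zero, zero_div, sub_zero,
    mul_im, zero_mul, neg_re, neg_im, conj_re, zero_add, conj_im, sub_neg_eq_add, Complex.sq_norm]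
  field_simp
  ring

lemma sqrt_integral_sq_add_integral_sq_le {f g : ℝ → ℝ} {a b : ℝ} (hab : a ≤ b)
    (hf : IntervalIntegrable f volume a b) (hg : IntervalIntegrable g volume a b) :
    √((∫ t in a..b, f t) ^ 2 + (∫ t in a..b, g t) ^ 2) ≤ ∫ t in a..b, √(f t ^ 2 + g t ^ 2) := by
  have hfC : IntervalIntegrable (fun t => (f t : ℂ)) volume a b := ⟨hf.1.ofReal, hf.2.ofReal⟩
  have hgC : IntervalIntegrable (fun t => (g t : ℂ)) volume a b := ⟨hg.1.ofReal, hg.2.ofReal⟩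
  calc √((∫ t in a..b, f t) ^ 2 + (∫ t in a..b, g t) ^ 2)
      = ‖((∫ t in a..b, f t : ℝ) : ℂ) + (∫ t in a..b, g t : ℝ) * I‖ := (norm_add_mul_I _ _).symm
    _ = ‖∫ t in a..b, ((f t : ℂ) + g t * I)‖ := by
      rw [integral_add hfC (hgC.mul_const I), intervalIntegral.integral_mul_const, integral_ofReal, integral_ofReal]
    _ ≤ ∫ t in a..b, ‖(f t : ℂ) + g t * I‖ := norm_integral_le_integral_norm hab
    _ = ∫ t in a..b, √(f t ^ 2 + g t ^ 2) := by simp only [norm_add_mul_I]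

section UpperHalfPlane

variable {w w' : ℝ → ℂ} {a b : ℝ}

lemma intervalIntegrable_norm_div_im (hab : a ≤ b) (hw : ContinuousOn w (Icc a b))
    (hw' : ContinuousOn w' (Icc a b)) (hpos : ∀ t ∈ Icc a b, 0 < (w t).im) :
    IntervalIntegrable (fun t => ‖w' t‖ / (w t).im) volume a b :=
  ((continuous_norm.comp_continuousOn hw').div (continuous_im.comp_continuousOn hw)
    fun t ht => (hpos t ht).ne').intervalIntegrable_of_Icc hab

lemma abs_log_im_sub_log_im_le_integral (hab : a ≤ b)
    (hw : ∀ t ∈ Icc a b, HasDerivWithinAt w (w' t) (Icc a b) t)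
    (hw' : ContinuousOn w' (Icc a b)) (hpos : ∀ t ∈ Icc a b, 0 < (w t).im) :
    |Real.log (w b).im - Real.log (w a).im| ≤ ∫ t in a..b, ‖w' t‖ / (w t).im := by
  have hwc : ContinuousOn w (Icc a b) := fun t ht => (hw t ht).continuousWithinAt
  have him : ContinuousOn (fun t => (w t).im) (Icc a b) := continuous_im.comp_continuousOn hwc
  have hquot : ContinuousOn (fun t => (w' t).im / (w t).im) (Icc a b) :=
    (continuous_im.comp_continuousOn hw').div him fun t ht => (hpos t ht).ne'
  have hlog : ∫ t in a..b, (w' t).im / (w t).im = Real.log (w b).im - Real.log (w a).im := by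
    refine integral_eq_sub_of_hasDeriv_right_of_le hab
      (him.log fun t ht => (hpos t ht).ne') (fun t ht => ?_)
      (hquot.intervalIntegrable_of_Icc hab)
    have hwt : HasDerivAt w (w' t) t := (hw t (Ioo_subset_Icc_self ht)).hasDerivAt (Icc_mem_nhds ht.1 ht.2)
    exact ((imCLM.hasFDerivAt.comp_hasDerivAt t hwt).log (hpos t (Ioo_subset_Icc_self ht)).ne').hasDerivWithinAt
  rw [← hlog]
  refine (abs_integral_le_integral_abs hab).trans (integral_mono_on hab ?_
    (intervalIntegrable_norm_div_im hab hwc hw' hpos) fun t ht => ?_)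
  · exact hquot.abs.intervalIntegrable_of_Icc hab
  · rw [abs_div, abs_of_pos (hpos t ht)]
    exact div_le_div_of_nonneg_right (abs_im_le_norm _) (hpos t ht).le

end UpperHalfPlane

lemma sqrt_log_sq_add_log_sq_le_length {τ z τ' z' : ℝ → ℂ} {a b : ℝ} (hab : a ≤ b)
    (hH : ∀ t ∈ Icc a b, _root_.mk τ z t ∈ Hhat)
    (hD : ∀ t ∈ Icc a b, HasDerivWithinAt τ (τ' t) (Icc a b) t ∧
      HasDerivWithinAt z (z' t) (Icc a b) t)
    (hτ' : ContinuousOn τ' (Icc a b)) (hz' : ContinuousOn z' (Icc a b)) :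
    √((Real.log (τ b + z b).im - Real.log (τ a + z a).im) ^ 2 +
        (Real.log (τ b - z b).im - Real.log (τ a - z a).im) ^ 2) ≤
      ∫ t in a..b, √((metricForm (_root_.mk τ z t) (_root_.mk τ' z' t)).re) := by
  have hpos := fun t ht => (mk_mem_Hhat_iff τ z t).1 (hH t ht)
  have hτc : ContinuousOn τ (Icc a b) := fun t ht => (hD t ht).1.continuousWithinAt
  have hzc : ContinuousOn z (Icc a b) := fun t ht => (hD t ht).2.continuousWithinAt
  have hu := abs_log_im_sub_log_im_le_integral hab (fun t ht => (hD t ht).1.add (hD t ht).2)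
    (hτ'.add hz') fun t ht => (hpos t ht).1
  have hv := abs_log_im_sub_log_im_le_integral hab (fun t ht => (hD t ht).1.sub (hD t ht).2)
    (hτ'.sub hz') fun t ht => (hpos t ht).2
  calc
    _ ≤ √((∫ t in a..b, ‖τ' t + z' t‖ / (τ t + z t).im) ^ 2 +
        (∫ t in a..b, ‖τ' t - z' t‖ / (τ t - z t).im) ^ 2) :=
      Real.sqrt_le_sqrt (add_le_add (sq_le_sq.2 (hu.trans (le_abs_self _)))
        (sq_le_sq.2 (hv.trans (le_abs_self _))))
    _ ≤ _ := sqrt_integral_sq_add_integral_sq_le hab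
      (intervalIntegrable_norm_div_im hab (hτc.add hzc) (hτ'.add hz') fun t ht => (hpos t ht).1)
      (intervalIntegrable_norm_div_im hab (hτc.sub hzc) (hτ'.sub hz') fun t ht => (hpos t ht).2)
    _ = _ := integral_congr fun t ht => by
      rw [uIcc_of_le hab] at ht
      rw [_root_.mk, _root_.mk, metricForm_bisymm_re (hpos t ht).1.ne' (hpos t ht).2.ne', div_pow,
        div_pow]

section Geodesic

variable {l₁ l₂ t₀ : ℝ}

lemma geoT_add_geoZ (t : ℝ) :
    geoT l₁ l₂ t₀ t + geoZ l₁ l₂ t₀ t = I * ((l₁ + l₂) ^ (t / t₀) : ℝ) := by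
  simp only [geoT, geoZ]; push_cast; ring

lemma geoT_sub_geoZ (t : ℝ) :
    geoT l₁ l₂ t₀ t - geoZ l₁ l₂ t₀ t = I * ((l₁ - l₂) ^ (t / t₀) : ℝ) := by
  simp only [geoT, geoZ]; push_cast; ring

lemma geoT'_add_geoZ' (t : ℝ) :
    geoT' l₁ l₂ t₀ t + geoZ' l₁ l₂ t₀ t =
      I * (Real.log (l₁ + l₂) * (l₁ + l₂) ^ (t / t₀) / t₀ : ℝ) := by
  simp only [geoT', geoZ']; push_cast; field_simp; ring

lemma geoT'_sub_geoZ' (t : ℝ) :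
    geoT' l₁ l₂ t₀ t - geoZ' l₁ l₂ t₀ t =
      I * (Real.log (l₁ - l₂) * (l₁ - l₂) ^ (t / t₀) / t₀ : ℝ) := by
  simp only [geoT', geoZ']; push_cast; field_simp; ring

lemma mk_geo_mem_Hhat (hp : 0 < l₁ + l₂) (hm : 0 < l₁ - l₂) (t : ℝ) :
    _root_.mk (geoT l₁ l₂ t₀) (geoZ l₁ l₂ t₀) t ∈ Hhat := by
  rw [mk_mem_Hhat_iff, geoT_add_geoZ, geoT_sub_geoZ]
  simp [Real.rpow_pos_of_pos hp, Real.rpow_pos_of_pos hm]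

lemma geoT_self (ht₀ : t₀ ≠ 0) : geoT l₁ l₂ t₀ t₀ = I * l₁ := by
  simp only [geoT, div_self ht₀, Real.rpow_one]; push_cast; ring

lemma geoZ_self (ht₀ : t₀ ≠ 0) : geoZ l₁ l₂ t₀ t₀ = I * l₂ := by
  simp only [geoZ, div_self ht₀, Real.rpow_one]; push_cast; ring

lemma hasDerivAt_rpow_div {c : ℝ} (hc : 0 < c) (t₀ t : ℝ) :
    HasDerivAt (fun t => c ^ (t / t₀)) (Real.log c * c ^ (t / t₀) / t₀) t := by
  refine ((Real.hasStrictDerivAt_const_rpow hc (t / t₀)).hasDerivAt.comp t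
    ((hasDerivAt_id t).div_const t₀)).congr_deriv ?_
  ring

lemma hasDerivAt_geoT (hp : 0 < l₁ + l₂) (hm : 0 < l₁ - l₂) (t : ℝ) :
    HasDerivAt (geoT l₁ l₂ t₀) (geoT' l₁ l₂ t₀ t) t := by
  refine ((((hasDerivAt_rpow_div hp t₀ t).add (hasDerivAt_rpow_div hm t₀ t)).div_const
    2).ofReal_comp.const_mul I).congr_deriv ?_
  simp only [geoT']; push_cast; ring

lemma hasDerivAt_geoZ (hp : 0 < l₁ + l₂) (hm : 0 < l₁ - l₂) (t : ℝ) :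
    HasDerivAt (geoZ l₁ l₂ t₀) (geoZ' l₁ l₂ t₀ t) t := by
  refine ((((hasDerivAt_rpow_div hp t₀ t).sub (hasDerivAt_rpow_div hm t₀ t)).div_const
    2).ofReal_comp.const_mul I).congr_deriv ?_
  simp only [geoZ']; push_cast; ring

lemma metricForm_geo_re (hp : 0 < l₁ + l₂) (hm : 0 < l₁ - l₂) (t : ℝ) :
    (metricForm (_root_.mk (geoT l₁ l₂ t₀) (geoZ l₁ l₂ t₀) t)
      (_root_.mk (geoT' l₁ l₂ t₀) (geoZ' l₁ l₂ t₀) t)).re =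
      (Real.log (l₁ + l₂) ^ 2 + Real.log (l₁ - l₂) ^ 2) / t₀ ^ 2 := by
  have hpt := (Real.rpow_pos_of_pos hp (t / t₀)).ne'
  have hmt := (Real.rpow_pos_of_pos hm (t / t₀)).ne'
  rw [_root_.mk, _root_.mk, metricForm_bisymm_re (by simp [geoT_add_geoZ, hpt])
    (by simp [geoT_sub_geoZ, hmt]), geoT_add_geoZ, geoT_sub_geoZ, geoT'_add_geoZ',
    geoT'_sub_geoZ']
  simp only [norm_mul, norm_I, one_mul, norm_real, Real.norm_eq_abs, sq_abs, mul_im, I_re,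
    I_im, ofReal_re, ofReal_im, zero_mul, one_mul, zero_add]
  field_simp

lemma length_geo (hp : 0 < l₁ + l₂) (hm : 0 < l₁ - l₂) (ht₀ : 0 < t₀) :
    ∫ t in (0 : ℝ)..t₀, √((metricForm (_root_.mk (geoT l₁ l₂ t₀) (geoZ l₁ l₂ t₀) t)
      (_root_.mk (geoT' l₁ l₂ t₀) (geoZ' l₁ l₂ t₀) t)).re) =
      √(Real.log (l₁ + l₂) ^ 2 + Real.log (l₁ - l₂) ^ 2) := by
  simp only [metricForm_geo_re hp hm, Real.sqrt_div' _ (sq_nonneg t₀), Real.sqrt_sq ht₀.le,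
    intervalIntegral.integral_const, sub_zero, smul_eq_mul]
  field_simp

end Geodesic

/-- (i) every C¹ curve in `Ĥ₂` from `iI` to `iΛ` has symplectic
length at least `ρ = √(log²(λ₁+λ₂) + log²(λ₁−λ₂))`; (ii) the explicit curve
`geoT/geoZ` joins `iI` to `iΛ` in `Ĥ₂` and has symplectic length exactly `ρ`. -/
theorem stmt_13 (l₁ l₂ : ℝ) (hl₂ : 0 ≤ l₂) (hl₁ : l₂ + 1 ≤ l₁)
    (t₀ : ℝ) (ht₀ : 0 < t₀) :
    (∀ τ z τ' z' : ℝ → ℂ,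
      (∀ t ∈ Set.Icc (0 : ℝ) t₀, mk τ z t ∈ Hhat) →
      (∀ t ∈ Set.Icc (0 : ℝ) t₀, HasDerivWithinAt τ (τ' t) (Set.Icc (0 : ℝ) t₀) t ∧
        HasDerivWithinAt z (z' t) (Set.Icc (0 : ℝ) t₀) t) →
      ContinuousOn τ' (Set.Icc (0 : ℝ) t₀) → ContinuousOn z' (Set.Icc (0 : ℝ) t₀) →
      τ 0 = Complex.I → z 0 = 0 →
      τ t₀ = Complex.I * (l₁ : ℂ) → z t₀ = Complex.I * (l₂ : ℂ) →
      Real.sqrt (Real.log (l₁ + l₂) ^ 2 + Real.log (l₁ - l₂) ^ 2) ≤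
        ∫ t in (0 : ℝ)..t₀, Real.sqrt ((metricForm (mk τ z t) (mk τ' z' t)).re)) ∧
    ((∀ t ∈ Set.Icc (0 : ℝ) t₀, mk (geoT l₁ l₂ t₀) (geoZ l₁ l₂ t₀) t ∈ Hhat) ∧
      geoT l₁ l₂ t₀ 0 = Complex.I ∧ geoZ l₁ l₂ t₀ 0 = 0 ∧
      geoT l₁ l₂ t₀ t₀ = Complex.I * (l₁ : ℂ) ∧
      geoZ l₁ l₂ t₀ t₀ = Complex.I * (l₂ : ℂ) ∧
      (∀ t ∈ Set.Icc (0 : ℝ) t₀,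
        HasDerivWithinAt (geoT l₁ l₂ t₀) (geoT' l₁ l₂ t₀ t) (Set.Icc (0 : ℝ) t₀) t ∧
        HasDerivWithinAt (geoZ l₁ l₂ t₀) (geoZ' l₁ l₂ t₀ t) (Set.Icc (0 : ℝ) t₀) t) ∧
      (∫ t in (0 : ℝ)..t₀, Real.sqrt
          ((metricForm (mk (geoT l₁ l₂ t₀) (geoZ l₁ l₂ t₀) t)
            (mk (geoT' l₁ l₂ t₀) (geoZ' l₁ l₂ t₀) t)).re)) =
        Real.sqrt (Real.log (l₁ + l₂) ^ 2 + Real.log (l₁ - l₂) ^ 2)) := by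
  have hp : 0 < l₁ + l₂ := by linarith
  have hm : 0 < l₁ - l₂ := by linarith
  refine ⟨fun τ z τ' z' hH hD hτ' hz' h0τ h0z h1τ h1z => ?_, fun t _ => mk_geo_mem_Hhat hp hm t,
    by simp [geoT], by simp [geoZ], geoT_self ht₀.ne', geoZ_self ht₀.ne',
    fun t _ => ⟨(hasDerivAt_geoT hp hm t).hasDerivWithinAt,
      (hasDerivAt_geoZ hp hm t).hasDerivWithinAt⟩, length_geo hp hm ht₀⟩
  have h := sqrt_log_sq_add_log_sq_le_length ht₀.le hH hD hτ' hz'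
  simpa [h0τ, h0z, h1τ, h1z] using h
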